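/- If V is μ-strongly convex with μ > 0, then for the mean value discrete gradient, the solution y of the discrete gradient equation y = x − τ∇̄V(x,y) is unique, for any τ > 0 and x ∈ ℝⁿ. -/

import Mathlib

open InnerProductSpace intervalIntegral

local notation "⟪" x ", " y "⟫" => @inner ℝ _ _ x y


lemma grad_strong_mono {n : ℕ} (V : EuclideanSpace ℝ (Fin n) → ℝ) (hV : ContDiff ℝ 1 V)
    (μ : ℝ) (hconv : ConvexOn ℝ Set.univ (fun x => V x - μ / 2 * ‖x‖^2))
    (a b : EuclideanSpace ℝ (Fin n)) :
    μ * ‖a - b‖^2 ≤ ⟪gradient V a - gradient V b, a - b⟫ := by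
  set d := a - b with hd
  have hVdiff : Differentiable ℝ V := hV.differentiable one_ne_zero
  -- inner form of fderiv
  have hgradinner : ∀ p v : EuclideanSpace ℝ (Fin n),
      ⟪gradient V p, v⟫ = fderiv ℝ V p v := fun p v => toDual_symm_apply
  -- 1-D function
  set ψ : ℝ → ℝ := fun t => V (b + t • d) - μ / 2 * ‖b + t • d‖^2 with hψ
  have hψconv : ConvexOn ℝ Set.univ ψ := by
    have := hconv.comp_affineMap (AffineMap.lineMap b a)
    have heq : (fun x => V x - μ / 2 * ‖x‖^2) ∘ (AffineMap.lineMap b a) = ψ := by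
      funext t
      simp only [Function.comp_apply, AffineMap.lineMap_apply, vsub_eq_sub, vadd_eq_add, hψ, hd]
      rw [add_comm (t • (a - b)) b]
    rw [heq] at this
    simpa using this
  have hline : ∀ t : ℝ, HasDerivAt (fun t : ℝ => b + t • d) d t := by
    intro t
    simpa using ((hasDerivAt_id t).smul_const d).const_add b
  have hψderiv : ∀ t : ℝ,
      HasDerivAt ψ (⟪gradient V (b + t • d), d⟫ - μ / 2 * (2 * ⟪b, d⟫ + 2 * t * ‖d‖^2)) t := by
    intro t
    have h1 : HasDerivAt (fun t : ℝ => V (b + t • d)) (⟪gradient V (b + t • d), d⟫) t := by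
      rw [hgradinner]
      exact (hVdiff (b + t • d)).hasFDerivAt.comp_hasDerivAt t (hline t)
    have h2 : HasDerivAt (fun t : ℝ => μ / 2 * (‖b‖^2 + 2 * t * ⟪b, d⟫ + t^2 * ‖d‖^2))
        (μ / 2 * (2 * ⟪b, d⟫ + 2 * t * ‖d‖^2)) t := by
      have : HasDerivAt (fun t : ℝ => ‖b‖^2 + 2 * t * ⟪b, d⟫ + t^2 * ‖d‖^2)
          (2 * ⟪b, d⟫ + 2 * t * ‖d‖^2) t := by
        have ha : HasDerivAt (fun t : ℝ => 2 * t * ⟪b, d⟫) (2 * ⟪b, d⟫) t := by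
          simpa [mul_comm, mul_assoc] using
            (((hasDerivAt_id t).const_mul 2).mul_const (⟪b, d⟫))
        have hb : HasDerivAt (fun t : ℝ => t^2 * ‖d‖^2) (2 * t * ‖d‖^2) t := by
          simpa using ((hasDerivAt_pow 2 t).mul_const (‖d‖^2))
        exact ((ha.const_add (‖b‖^2)).add hb)
      exact this.const_mul (μ / 2)
    have hnorm : ∀ t : ℝ, ‖b + t • d‖^2 = ‖b‖^2 + 2 * t * ⟪b, d⟫ + t^2 * ‖d‖^2 := by
      intro t
      rw [norm_add_sq_real, real_inner_smul_right, norm_smul]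
      simp [mul_pow]
      ring
    have : ψ = fun t => V (b + t • d) - μ / 2 * (‖b‖^2 + 2 * t * ⟪b, d⟫ + t^2 * ‖d‖^2) := by
      funext t; simp only [hψ]; rw [hnorm t]
    rw [this]
    exact h1.sub h2
  have hle : (⟪gradient V (b + (0:ℝ) • d), d⟫ - μ / 2 * (2 * ⟪b, d⟫ + 2 * 0 * ‖d‖^2))
      ≤ (⟪gradient V (b + (1:ℝ) • d), d⟫ - μ / 2 * (2 * ⟪b, d⟫ + 2 * 1 * ‖d‖^2)) := by
    have l1 := hψconv.le_slope_of_hasDerivAt (Set.mem_univ 0) (Set.mem_univ 1) one_pos (hψderiv 0)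
    have l2 := hψconv.slope_le_of_hasDerivAt (Set.mem_univ 0) (Set.mem_univ 1) one_pos (hψderiv 1)
    exact l1.trans l2
  have hbd : b + (1:ℝ) • d = a := by rw [one_smul, hd]; abel
  rw [hbd] at hle
  simp only [zero_smul, add_zero] at hle
  have : μ * ‖d‖^2 ≤ ⟪gradient V a, d⟫ - ⟪gradient V b, d⟫ := by nlinarith [hle]
  rw [inner_sub_left]
  exact this

lemma aux_nonneg_le_zero (τ μ : ℝ) (hτ : 0 < τ) (hμ : 0 < μ) :
    ∀ A : ℝ, 0 ≤ A → A ≤ -τ * (μ * A * (1/2)) → A = 0 := by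
  intro A hA hA2
  nlinarith [mul_pos hτ hμ, mul_nonneg (mul_pos hτ hμ).le hA]

theorem mean_value_dg_unique_solution
    {n : ℕ} (V : EuclideanSpace ℝ (Fin n) → ℝ) (hV : ContDiff ℝ 1 V)
    (μ : ℝ) (hμ : 0 < μ)
    (hconv : ConvexOn ℝ Set.univ (fun x => V x - μ / 2 * ‖x‖^2))
    (τ : ℝ) (hτ : 0 < τ) (x y₁ y₂ : EuclideanSpace ℝ (Fin n))
    (h₁ : y₁ = x - τ • ∫ s in (0:ℝ)..1, gradient V ((1 - s) • x + s • y₁))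
    (h₂ : y₂ = x - τ • ∫ s in (0:ℝ)..1, gradient V ((1 - s) • x + s • y₂)) :
    y₁ = y₂ := by
  set d : EuclideanSpace ℝ (Fin n) := y₁ - y₂ with hdd
  set f₁ : ℝ → EuclideanSpace ℝ (Fin n) := fun s => gradient V ((1 - s) • x + s • y₁) with hf₁
  set f₂ : ℝ → EuclideanSpace ℝ (Fin n) := fun s => gradient V ((1 - s) • x + s • y₂) with hf₂
  have gcont : Continuous (gradient V) := by
    have : gradient V = fun p => (toDual ℝ (EuclideanSpace ℝ (Fin n))).symm (fderiv ℝ V p) := rfl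
    rw [this]
    exact (toDual ℝ (EuclideanSpace ℝ (Fin n))).symm.continuous.comp (hV.continuous_fderiv one_ne_zero)
  have hc₁ : Continuous f₁ :=
    gcont.comp (((continuous_const.sub continuous_id).smul continuous_const).add
      (continuous_id.smul continuous_const))
  have hc₂ : Continuous f₂ :=
    gcont.comp (((continuous_const.sub continuous_id).smul continuous_const).add
      (continuous_id.smul continuous_const))
  have hi₁ : IntervalIntegrable f₁ MeasureTheory.volume 0 1 := hc₁.intervalIntegrable 0 1
  have hi₂ : IntervalIntegrable f₂ MeasureTheory.volume 0 1 := hc₂.intervalIntegrable 0 1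
  -- move inner product inside integrals
  have hinner₁ : (∫ s in (0:ℝ)..1, ⟪d, f₁ s⟫) = ⟪d, ∫ s in (0:ℝ)..1, f₁ s⟫ :=
    (innerSL ℝ d).intervalIntegral_comp_comm hi₁
  have hinner₂ : (∫ s in (0:ℝ)..1, ⟪d, f₂ s⟫) = ⟪d, ∫ s in (0:ℝ)..1, f₂ s⟫ :=
    (innerSL ℝ d).intervalIntegral_comp_comm hi₂
  -- pointwise bound
  have hpt : ∀ s ∈ Set.Icc (0:ℝ) 1, μ * ‖d‖^2 * s ≤ ⟪d, f₁ s⟫ - ⟪d, f₂ s⟫ := by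
    intro s hs
    set a : EuclideanSpace ℝ (Fin n) := (1 - s) • x + s • y₁ with ha
    set b : EuclideanSpace ℝ (Fin n) := (1 - s) • x + s • y₂ with hb
    have hab : a - b = s • d := by
      rw [ha, hb, hdd]; module
    have hm := grad_strong_mono V hV μ hconv a b
    rw [hab] at hm
    have h1 : ⟪gradient V a - gradient V b, s • d⟫ = s * ⟪gradient V a - gradient V b, d⟫ :=
      real_inner_smul_right _ _ _
    have h2 : ‖s • d‖^2 = s^2 * ‖d‖^2 := by
      rw [norm_smul, mul_pow, Real.norm_eq_abs, sq_abs]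
    rw [h1, h2] at hm
    have hsub : ⟪d, f₁ s⟫ - ⟪d, f₂ s⟫ = ⟪gradient V a - gradient V b, d⟫ := by
      rw [← inner_sub_right, real_inner_comm]
    rw [hsub]
    rcases eq_or_lt_of_le hs.1 with h0 | h0
    · have : a = b := by rw [ha, hb, ← h0]; simp
      rw [← h0, this]
      simp
    · nlinarith [hm]
  -- integrability of the inner products
  have hii₁ : IntervalIntegrable (fun s => ⟪d, f₁ s⟫) MeasureTheory.volume 0 1 :=
    (continuous_const.inner hc₁).intervalIntegrable 0 1
  have hii₂ : IntervalIntegrable (fun s => ⟪d, f₂ s⟫) MeasureTheory.volume 0 1 :=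
    (continuous_const.inner hc₂).intervalIntegrable 0 1
  have hiμ : IntervalIntegrable (fun s => μ * ‖d‖^2 * s) MeasureTheory.volume 0 1 :=
    (continuous_const.mul continuous_id).intervalIntegrable 0 1
  have hintle : μ * ‖d‖^2 * (1/2) ≤ (∫ s in (0:ℝ)..1, ⟪d, f₁ s⟫) - ∫ s in (0:ℝ)..1, ⟪d, f₂ s⟫ := by
    have h1 : (∫ s in (0:ℝ)..1, μ * ‖d‖^2 * s) ≤ ∫ s in (0:ℝ)..1, (⟪d, f₁ s⟫ - ⟪d, f₂ s⟫) :=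
      intervalIntegral.integral_mono_on zero_le_one hiμ (hii₁.sub hii₂) hpt
    have h2 : (∫ s in (0:ℝ)..1, μ * ‖d‖^2 * s) = μ * ‖d‖^2 * (1/2) := by
      rw [intervalIntegral.integral_const_mul, integral_id]
      norm_num
    rw [intervalIntegral.integral_sub hii₁ hii₂] at h1
    linarith [h1, h2.symm.le]
  -- the fixed point relation
  have hrel : d = τ • ((∫ s in (0:ℝ)..1, f₂ s) - ∫ s in (0:ℝ)..1, f₁ s) := by
    rw [hdd]
    conv_lhs => rw [h₁, h₂]
    rw [smul_sub]
    abel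
  have hnorm : ‖d‖^2 = τ * (⟪d, ∫ s in (0:ℝ)..1, f₂ s⟫ - ⟪d, ∫ s in (0:ℝ)..1, f₁ s⟫) := by
    rw [← real_inner_self_eq_norm_sq]
    nth_rewrite 2 [hrel]
    rw [real_inner_smul_right, inner_sub_right]
  have hfinal : ‖d‖^2 ≤ -τ * (μ * ‖d‖^2 * (1/2)) := by
    have h := hnorm
    rw [← hinner₁, ← hinner₂] at h
    nlinarith [mul_le_mul_of_nonneg_left hintle hτ.le, h]
  have hd0 : d = 0 := by
    have hn : (0:ℝ) ≤ ‖d‖^2 := sq_nonneg _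
    have h0 : ‖d‖^2 = 0 := aux_nonneg_le_zero τ μ hτ hμ _ hn hfinal
    exact norm_eq_zero.mp (pow_eq_zero_iff two_ne_zero |>.mp h0)
  rw [hdd] at hd0
  exact sub_eq_zero.mp hd0
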